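/- Let Φ and U be random d×M real matrices and V a random M×M real matrix on a probability space, with V almost surely symmetric positive definite. Assume all entries of Φ Uᵀ, Φ V Φᵀ and U V⁻¹ Uᵀ are integrable, and that G = E[U V⁻¹ Uᵀ] is invertible. Then with W = E[Φ Uᵀ] and Σ = E[Φ V Φᵀ], one has W G⁻¹ Wᵀ ⪯ Σ in the Loewner order; equivalently, aᵀ W G⁻¹ Wᵀ a ≤ aᵀ Σ a for every a ∈ ℝᵈ. -/

import Mathlib

open MeasureTheory Matrix

/-- Entrywise expectation of a random matrix. -/
noncomputable def matExp {Ω : Type*} [MeasurableSpace Ω] (μ : Measure Ω)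
    {m n : Type*} (f : Ω → Matrix m n ℝ) : Matrix m n ℝ :=
  Matrix.of fun i j => ∫ ω, f ω i j ∂μ

/-!
Fix `a` and put `b = G⁻¹ Wᵀ a`. Completing the square in the inner product given by `V ω` yields
`2 xᵀy ≤ xᵀ V x + yᵀ V⁻¹ y` pointwise; with `x = Φᵀ a`, `y = Uᵀ b` and after taking expectations,
`2 aᵀ W b ≤ aᵀ Σ a + bᵀ G b`. For this choice of `b` both `aᵀ W b` and `bᵀ G b` equal
`aᵀ W G⁻¹ Wᵀ a`, which gives the quadratic-form inequality. Since `Σ` and `G` are symmetric,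
it is a Loewner inequality.
-/

namespace Matrix

variable {m n k R : Type*}

lemma dotProduct_mul_transpose_mulVec [Fintype m] [Fintype n] [Fintype k] [CommSemiring R]
    (A : Matrix m n R) (C : Matrix k n R) (a : m → R) (b : k → R) :
    a ⬝ᵥ (A * Cᵀ) *ᵥ b = (Aᵀ *ᵥ a) ⬝ᵥ (Cᵀ *ᵥ b) := by
  rw [← mulVec_mulVec, dotProduct_mulVec, ← mulVec_transpose]

lemma dotProduct_mul_mul_transpose_mulVec [Fintype m] [Fintype n] [Fintype k] [CommSemiring R]
    (A : Matrix m n R) (B : Matrix n n R) (C : Matrix k n R) (a : m → R) (b : k → R) :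
    a ⬝ᵥ (A * B * Cᵀ) *ᵥ b = (Aᵀ *ᵥ a) ⬝ᵥ B *ᵥ (Cᵀ *ᵥ b) := by
  rw [← mulVec_mulVec, ← mulVec_mulVec, dotProduct_mulVec, ← mulVec_transpose]

lemma isHermitian_mul_mul_transpose [Fintype n] [CommSemiring R] [StarRing R] [TrivialStar R]
    {A : Matrix n n R} (B : Matrix m n R) (hA : A.IsHermitian) : (B * A * Bᵀ).IsHermitian := by
  simpa only [conjTranspose_eq_transpose_of_trivial] using isHermitian_mul_mul_conjTranspose B hA

lemma PosDef.two_mul_dotProduct_le [Fintype n] [DecidableEq n] {V : Matrix n n ℝ} (hV : V.PosDef)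
    (x y : n → ℝ) : 2 * (x ⬝ᵥ y) ≤ x ⬝ᵥ V *ᵥ x + y ⬝ᵥ V⁻¹ *ᵥ y := by
  set w := V⁻¹ *ᵥ y
  have hVw : V *ᵥ w = y := by
    rw [mulVec_mulVec, mul_nonsing_inv _ (isUnit_iff_ne_zero.2 hV.det_pos.ne'), one_mulVec]
  have hsymm : w ⬝ᵥ V *ᵥ x = y ⬝ᵥ x := by
    rw [dotProduct_mulVec, ← mulVec_transpose, ← conjTranspose_eq_transpose_of_trivial,
      hV.isHermitian.eq, hVw]
  have hsq : 0 ≤ (x - w) ⬝ᵥ V *ᵥ (x - w) := by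
    simpa only [star_trivial] using hV.posSemidef.dotProduct_mulVec_nonneg (x - w)
  simp only [mulVec_sub, sub_dotProduct, dotProduct_sub, hVw, hsymm] at hsq
  linarith [dotProduct_comm x y, dotProduct_comm w y]

variable [Field R] [LinearOrder R] [IsStrictOrderedRing R]

lemma dotProduct_mul_inv_mul_transpose_mulVec_le [Fintype m] [Fintype k] [DecidableEq k]
    {W : Matrix m k R} {S : Matrix m m R} {G : Matrix k k R} (hG : IsUnit G.det) (a : m → R)
    (h : ∀ b, 2 * (a ⬝ᵥ W *ᵥ b) ≤ a ⬝ᵥ S *ᵥ a + b ⬝ᵥ G *ᵥ b) :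
    a ⬝ᵥ (W * G⁻¹ * Wᵀ) *ᵥ a ≤ a ⬝ᵥ S *ᵥ a := by
  set b := (G⁻¹ * Wᵀ) *ᵥ a
  have hWb : a ⬝ᵥ W *ᵥ b = a ⬝ᵥ (W * G⁻¹ * Wᵀ) *ᵥ a := by
    rw [mulVec_mulVec, Matrix.mul_assoc]
  have hGb : b ⬝ᵥ G *ᵥ b = a ⬝ᵥ W *ᵥ b := by
    rw [mulVec_mulVec, ← Matrix.mul_assoc, mul_nonsing_inv _ hG, Matrix.one_mul,
      dotProduct_mulVec, ← mulVec_transpose, transpose_transpose, dotProduct_comm]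
  linarith [h b]

lemma posSemidef_sub_of_dotProduct_mulVec_le [Fintype n] [StarRing R] [TrivialStar R]
    {A B : Matrix n n R} (hA : A.IsHermitian) (hB : B.IsHermitian)
    (h : ∀ x, x ⬝ᵥ A *ᵥ x ≤ x ⬝ᵥ B *ᵥ x) :
    (B - A).PosSemidef :=
  PosSemidef.of_dotProduct_mulVec_nonneg (hB.sub hA) fun x => by
    simpa only [star_trivial, sub_mulVec, dotProduct_sub, sub_nonneg] using h x

end Matrix

section matExp

variable {Ω m n k : Type*} [MeasurableSpace Ω] {μ : Measure Ω}

lemma matExp_transpose (f : Ω → Matrix m n ℝ) :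
    (matExp μ f)ᵀ = matExp μ fun ω => (f ω)ᵀ := rfl

lemma matExp_congr_ae {f g : Ω → Matrix m n ℝ} (h : f =ᵐ[μ] g) : matExp μ f = matExp μ g := by
  ext i j
  exact integral_congr_ae (h.mono fun ω hω => congrFun (congrFun hω i) j)

lemma isHermitian_matExp {f : Ω → Matrix n n ℝ} (hf : ∀ᵐ ω ∂μ, (f ω).IsHermitian) :
    (matExp μ f).IsHermitian := by
  rw [IsHermitian, conjTranspose_eq_transpose_of_trivial, matExp_transpose]
  exact matExp_congr_ae (hf.mono fun ω hω =>
    (conjTranspose_eq_transpose_of_trivial (f ω)).symm.trans hω.eq)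

variable [Fintype m] [Fintype n]

lemma integrable_dotProduct_mulVec {f : Ω → Matrix m n ℝ}
    (hf : ∀ i j, Integrable (fun ω => f ω i j) μ) (a : m → ℝ) (b : n → ℝ) :
    Integrable (fun ω => a ⬝ᵥ f ω *ᵥ b) μ :=
  integrable_finsetSum _ fun i _ =>
    (integrable_finsetSum _ fun j _ => (hf i j).mul_const (b j)).const_mul (a i)

lemma dotProduct_matExp_mulVec {f : Ω → Matrix m n ℝ}
    (hf : ∀ i j, Integrable (fun ω => f ω i j) μ) (a : m → ℝ) (b : n → ℝ) :
    a ⬝ᵥ matExp μ f *ᵥ b = ∫ ω, a ⬝ᵥ f ω *ᵥ b ∂μ := by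
  simp only [dotProduct, mulVec, matExp, of_apply]
  rw [integral_finsetSum _ fun i _ =>
    (integrable_finsetSum _ fun j _ => (hf i j).mul_const (b j)).const_mul (a i)]
  refine Finset.sum_congr rfl fun i _ => ?_
  rw [integral_const_mul, integral_finsetSum _ fun j _ => (hf i j).mul_const (b j)]
  simp only [integral_mul_const]

lemma two_mul_dotProduct_matExp_mulVec_le [Fintype k] [DecidableEq n]
    {Φ : Ω → Matrix m n ℝ} {U : Ω → Matrix k n ℝ} {V : Ω → Matrix n n ℝ}
    (hV : ∀ᵐ ω ∂μ, (V ω).PosDef)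
    (hΦU : ∀ i j, Integrable (fun ω => (Φ ω * (U ω)ᵀ) i j) μ)
    (hΦV : ∀ i j, Integrable (fun ω => (Φ ω * V ω * (Φ ω)ᵀ) i j) μ)
    (hUV : ∀ i j, Integrable (fun ω => (U ω * (V ω)⁻¹ * (U ω)ᵀ) i j) μ)
    (a : m → ℝ) (b : k → ℝ) :
    2 * (a ⬝ᵥ matExp μ (fun ω => Φ ω * (U ω)ᵀ) *ᵥ b) ≤
      a ⬝ᵥ matExp μ (fun ω => Φ ω * V ω * (Φ ω)ᵀ) *ᵥ a +
        b ⬝ᵥ matExp μ (fun ω => U ω * (V ω)⁻¹ * (U ω)ᵀ) *ᵥ b := by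
  rw [dotProduct_matExp_mulVec hΦU, dotProduct_matExp_mulVec hΦV, dotProduct_matExp_mulVec hUV,
    ← integral_const_mul, ← integral_add (integrable_dotProduct_mulVec hΦV a a)
      (integrable_dotProduct_mulVec hUV b b)]
  refine integral_mono_ae ((integrable_dotProduct_mulVec hΦU a b).const_mul 2)
    ((integrable_dotProduct_mulVec hΦV a a).add (integrable_dotProduct_mulVec hUV b b)) ?_
  filter_upwards [hV] with ω hVω
  rw [dotProduct_mul_transpose_mulVec, dotProduct_mul_mul_transpose_mulVec,
    dotProduct_mul_mul_transpose_mulVec]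
  exact hVω.two_mul_dotProduct_le _ _

end matExp

theorem gee_cauchy_schwarz_loewner_general
    {Ω : Type*} [MeasurableSpace Ω] (μ : Measure Ω)
    {d M : ℕ}
    (Φ U : Ω → Matrix (Fin d) (Fin M) ℝ) (V : Ω → Matrix (Fin M) (Fin M) ℝ)
    (hVpd : ∀ᵐ ω ∂μ, (V ω).PosDef)
    (hint1 : ∀ i j, Integrable (fun ω => (Φ ω * (U ω)ᵀ) i j) μ)
    (hint2 : ∀ i j, Integrable (fun ω => (Φ ω * V ω * (Φ ω)ᵀ) i j) μ)
    (hint3 : ∀ i j, Integrable (fun ω => (U ω * (V ω)⁻¹ * (U ω)ᵀ) i j) μ)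
    (W Sig G : Matrix (Fin d) (Fin d) ℝ)
    (hW : W = matExp μ fun ω => Φ ω * (U ω)ᵀ)
    (hSig : Sig = matExp μ fun ω => Φ ω * V ω * (Φ ω)ᵀ)
    (hG : G = matExp μ fun ω => U ω * (V ω)⁻¹ * (U ω)ᵀ)
    (hGinv : IsUnit G) :
    (Sig - W * G⁻¹ * Wᵀ).PosSemidef ∧
      ∀ a : Fin d → ℝ, a ⬝ᵥ (W * G⁻¹ * Wᵀ).mulVec a ≤ a ⬝ᵥ Sig.mulVec a := by
  have hVherm : ∀ᵐ ω ∂μ, (V ω).IsHermitian := hVpd.mono fun _ h => h.isHermitian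
  have hSig_herm : Sig.IsHermitian :=
    hSig ▸ isHermitian_matExp (hVherm.mono fun ω h => isHermitian_mul_mul_transpose (Φ ω) h)
  have hG_herm : G.IsHermitian :=
    hG ▸ isHermitian_matExp (hVherm.mono fun ω h => isHermitian_mul_mul_transpose (U ω) h.inv)
  have hquad : ∀ a, a ⬝ᵥ (W * G⁻¹ * Wᵀ) *ᵥ a ≤ a ⬝ᵥ Sig *ᵥ a := fun a =>
    dotProduct_mul_inv_mul_transpose_mulVec_le ((isUnit_iff_isUnit_det G).1 hGinv) a fun b => by
      subst hW hSig hG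
      exact two_mul_dotProduct_matExp_mulVec_le hVpd hint1 hint2 hint3 a b
  have hWGW_herm : (W * G⁻¹ * Wᵀ).IsHermitian := isHermitian_mul_mul_transpose W hG_herm.inv
  exact ⟨posSemidef_sub_of_dotProduct_mulVec_le hWGW_herm hSig_herm hquad, hquad⟩

/-- Cauchy–Schwarz-type inequality for GEE: `W G⁻¹ Wᵀ ⪯ Σ` in the Loewner order,
equivalently `aᵀ W G⁻¹ Wᵀ a ≤ aᵀ Σ a` for every `a`. -/
theorem gee_cauchy_schwarz_loewner
    {Ω : Type*} [MeasurableSpace Ω] (μ : Measure Ω) [IsProbabilityMeasure μ]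
    {d M : ℕ}
    (Φ U : Ω → Matrix (Fin d) (Fin M) ℝ) (V : Ω → Matrix (Fin M) (Fin M) ℝ)
    (hVpd : ∀ᵐ ω ∂μ, (V ω).PosDef)
    (hint1 : ∀ i j, Integrable (fun ω => (Φ ω * (U ω)ᵀ) i j) μ)
    (hint2 : ∀ i j, Integrable (fun ω => (Φ ω * V ω * (Φ ω)ᵀ) i j) μ)
    (hint3 : ∀ i j, Integrable (fun ω => (U ω * (V ω)⁻¹ * (U ω)ᵀ) i j) μ)
    (W Sig G : Matrix (Fin d) (Fin d) ℝ)
    (hW : W = matExp μ fun ω => Φ ω * (U ω)ᵀ)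
    (hSig : Sig = matExp μ fun ω => Φ ω * V ω * (Φ ω)ᵀ)
    (hG : G = matExp μ fun ω => U ω * (V ω)⁻¹ * (U ω)ᵀ)
    (hGinv : IsUnit G) :
    (Sig - W * G⁻¹ * Wᵀ).PosSemidef ∧
      ∀ a : Fin d → ℝ, a ⬝ᵥ (W * G⁻¹ * Wᵀ).mulVec a ≤ a ⬝ᵥ Sig.mulVec a :=
  gee_cauchy_schwarz_loewner_general μ Φ U V hVpd hint1 hint2 hint3 W Sig G hW hSig hG hGinv
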